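/- Let H be the graph on all labeled k-uniform hypergraphs on n vertices with exactly M hyperedges, where two hypergraphs are adjacent iff one is obtained from the other by swapping one hyperedge with one non-hyperedge, equipped with the lazy uniform random walk m_ℋ(ℋ') = 1/(M(C(n,k)-M)+1) on closed neighborhoods. Then H is M(C(n,k)-M)-regular, the uniform distribution is invariant, and the Ricci curvature satisfies κ(ℋ₁, ℋ₂) ≥ C(n,k)/(M(C(n,k)-M)+1) for all ℋ₁, ℋ₂. -/

import Mathlib

open Finset

/-- A probability vector on a finite set. -/
def IsProbVec {V : Type*} [Fintype V] (m : V → ℝ) : Prop :=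
  (∀ x, 0 ≤ m x) ∧ ∑ x, m x = 1

/-- A coupling between two probability vectors. -/
def IsCoupling {V : Type*} [Fintype V] (m₁ m₂ : V → ℝ) (A : V → V → ℝ) : Prop :=
  (∀ x y, 0 ≤ A x y) ∧ (∀ x, ∑ y, A x y = m₁ x) ∧ (∀ y, ∑ x, A x y = m₂ y)

/-- The L¹-Wasserstein (transportation) distance between two probability vectors,
with respect to the graph metric. -/
noncomputable def Wdist {V : Type*} [Fintype V] (G : SimpleGraph V) (m₁ m₂ : V → ℝ) : ℝ :=
  sInf {s | ∃ A : V → V → ℝ, IsCoupling m₁ m₂ A ∧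
    s = ∑ x, ∑ y, A x y * (G.dist x y : ℝ)}

/-- A random walk on a graph: at each vertex a probability measure supported on
the closed neighborhood. -/
def IsRandomWalk {V : Type*} [Fintype V] (G : SimpleGraph V) (m : V → V → ℝ) : Prop :=
  ∀ x, IsProbVec (m x) ∧ ∀ y, m x y ≠ 0 → y = x ∨ G.Adj x y

/-- Ollivier's Ricci curvature `κ(x,y) = 1 - W(m_x, m_y)/d(x,y)`. -/
noncomputable def ricci {V : Type*} [Fintype V] (G : SimpleGraph V) (m : V → V → ℝ)
    (x y : V) : ℝ :=
  1 - Wdist G (m x) (m y) / (G.dist x y : ℝ)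

/-- The averaging operator `(Mf)(x) = ∑_y f(y)·m_x(y)`. -/
def Mop {V : Type*} [Fintype V] (m : V → V → ℝ) (f : V → ℝ) : V → ℝ :=
  fun x => ∑ y, f y * m x y

/-- `k`-uniform hypergraphs on `n` vertices with exactly `M` hyperedges. -/
def HypergraphM (n k M : ℕ) :=
  {E : Finset (Finset (Fin n)) // (∀ h ∈ E, h.card = k) ∧ E.card = M}

instance (n k M : ℕ) : Fintype (HypergraphM n k M) := by unfold HypergraphM; infer_instance
instance (n k M : ℕ) : DecidableEq (HypergraphM n k M) := by unfold HypergraphM; infer_instance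

/-- The exchange graph on `k`-uniform hypergraphs with `M` hyperedges: adjacency is
swapping one hyperedge with one non-hyperedge. -/
def hypExchangeGraph (n k M : ℕ) : SimpleGraph (HypergraphM n k M) where
  Adj H₁ H₂ := (H₁.val \ H₂.val).card = 1 ∧ (H₂.val \ H₁.val).card = 1
  symm := ⟨fun _ _ h => ⟨h.2, h.1⟩⟩
  loopless := ⟨fun H h => by simp at h⟩

instance (n k M : ℕ) : DecidableRel (hypExchangeGraph n k M).Adj :=
  fun _ _ => show Decidable (_ ∧ _) from instDecidableAnd

/-- The lazy uniform walk on the hypergraph exchange graph, uniform on closed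
neighborhoods with mass `1/(M(C(n,k)-M)+1)`. -/
noncomputable def hypExchangeWalk (n k M : ℕ) :
    HypergraphM n k M → HypergraphM n k M → ℝ :=
  fun H H' =>
    if H = H' ∨ (hypExchangeGraph n k M).Adj H H' then
      1 / ((M * (n.choose k - M) : ℕ) + 1 : ℝ)
    else 0

/-! For adjacent hypergraphs `H₁` and `H₂ = H₁ - a + b`, exchanging the roles of the `k`-sets `a`
and `b` is an automorphism of the exchange graph swapping `H₁` and `H₂`. Followed by the
transposition of `H₁` and `H₂`, it maps the closed neighbourhood of `H₁` onto that of `H₂`, and it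
moves only the neighbours `H₁ - a' + b'` with `a' ≠ a`, `b' ≠ b`, each by one step. This
deterministic coupling gives `W(m_{H₁}, m_{H₂}) ≤ (M-1)(C(n,k)-M-1)/(M(C(n,k)-M)+1)`, and composing
such permutations along a geodesic gives `W ≤ d · (M-1)(C(n,k)-M-1)/(M(C(n,k)-M)+1)` for every
pair at distance `d`. Finally `C(n,k) + (M-1)(C(n,k)-M-1) = M(C(n,k)-M) + 1`. -/

open SimpleGraph

section Transport

variable {V : Type*} {G : SimpleGraph V}

structure IsTransport (G : SimpleGraph V) (μ ν : V → ℝ) (φ : Equiv.Perm V) : Prop where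
  apply_eq : ∀ x, ν (φ x) = μ x
  reachable : ∀ x, G.Reachable x (φ x)

theorem IsTransport.refl (μ : V → ℝ) : IsTransport G μ μ (Equiv.refl V) :=
  ⟨fun _ => rfl, fun _ => Reachable.refl _⟩

theorem IsTransport.trans {μ ν ρ : V → ℝ} {φ ψ : Equiv.Perm V} (hφ : IsTransport G μ ν φ)
    (hψ : IsTransport G ν ρ ψ) : IsTransport G μ ρ (φ.trans ψ) :=
  ⟨fun x => (hψ.apply_eq (φ x)).trans (hφ.apply_eq x),
    fun x => (hφ.reachable x).trans (hψ.reachable (φ x))⟩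

variable [Fintype V]

/-- The cost of the coupling of `μ` with its push-forward that moves the mass at `x` to `φ x`. -/
noncomputable def transportCost (G : SimpleGraph V) (μ : V → ℝ) (φ : Equiv.Perm V) : ℝ :=
  ∑ x, μ x * G.dist x (φ x)

theorem Wdist_le_transportCost {μ ν : V → ℝ} {φ : Equiv.Perm V} (hμ : ∀ x, 0 ≤ μ x)
    (h : ∀ x, ν (φ x) = μ x) : Wdist G μ ν ≤ transportCost G μ φ := by
  classical
  have hcost : ∀ A : V → V → ℝ, IsCoupling μ ν A → 0 ≤ ∑ x, ∑ y, A x y * (G.dist x y : ℝ) :=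
    fun A hA => Finset.sum_nonneg fun x _ => Finset.sum_nonneg fun y _ =>
      mul_nonneg (hA.1 x y) (Nat.cast_nonneg _)
  refine csInf_le ⟨0, fun s ⟨A, hA, hs⟩ => hs ▸ hcost A hA⟩
    ⟨fun x y => if y = φ x then μ x else 0, ⟨fun x y => ?_, fun x => ?_, fun y => ?_⟩, ?_⟩
  · dsimp only
    split_ifs
    exacts [hμ x, le_rfl]
  · simp
  · simp_rw [← Equiv.symm_apply_eq φ]
    simp [← h (φ.symm y)]
  · simp [transportCost, ite_mul]

theorem IsTransport.transportCost_trans_le {μ ν : V → ℝ} {φ : Equiv.Perm V}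
    (hμ : ∀ x, 0 ≤ μ x) (hφ : IsTransport G μ ν φ) (ψ : Equiv.Perm V) :
    transportCost G μ (φ.trans ψ) ≤ transportCost G μ φ + transportCost G ν ψ := by
  have hreindex : ∑ x, μ x * (G.dist (φ x) (ψ (φ x)) : ℝ) = transportCost G ν ψ := by
    simp_rw [← hφ.apply_eq]
    exact Equiv.sum_comp φ fun y => ν y * (G.dist y (ψ y) : ℝ)
  rw [← hreindex, transportCost, transportCost, ← Finset.sum_add_distrib]
  refine Finset.sum_le_sum fun x _ => ?_
  rw [← mul_add]
  refine mul_le_mul_of_nonneg_left ?_ (hμ x)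
  exact_mod_cast (hφ.reachable x).dist_triangle_left _

theorem exists_transport_of_walk {m : V → V → ℝ} {c : ℝ} (hm : ∀ x y, 0 ≤ m x y)
    (hedge : ∀ a b, G.Adj a b →
      ∃ φ, IsTransport G (m a) (m b) φ ∧ transportCost G (m a) φ ≤ c)
    {u v : V} (p : G.Walk u v) :
    ∃ φ, IsTransport G (m u) (m v) φ ∧ transportCost G (m u) φ ≤ p.length * c := by
  induction p with
  | nil => exact ⟨Equiv.refl V, .refl _, by simp [transportCost]⟩
  | @cons a b _ hab p ih =>
    obtain ⟨φ, hφ, hφc⟩ := hedge a b hab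
    obtain ⟨ψ, hψ, hψc⟩ := ih
    refine ⟨φ.trans ψ, hφ.trans hψ, ?_⟩
    calc transportCost G (m a) (φ.trans ψ)
        ≤ transportCost G (m a) φ + transportCost G (m b) ψ :=
          hφ.transportCost_trans_le (hm a) ψ
      _ ≤ c + p.length * c := add_le_add hφc hψc
      _ = (p.cons hab).length * c := by push_cast [Walk.length_cons]; ring

theorem le_ricci_of_forall_adj {m : V → V → ℝ} {c : ℝ} (hm : ∀ x y, 0 ≤ m x y) (hc : 0 ≤ c)
    (hedge : ∀ a b, G.Adj a b →
      ∃ φ, IsTransport G (m a) (m b) φ ∧ transportCost G (m a) φ ≤ c)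
    (u v : V) : 1 - c ≤ ricci G m u v := by
  rw [ricci, sub_le_sub_iff_left]
  rcases Nat.eq_zero_or_pos (G.dist u v) with hd | hd
  · -- the curvature is `1` here, as `x / 0 = 0`
    simpa [hd] using hc
  obtain ⟨p, hp⟩ := exists_walk_of_dist_ne_zero hd.ne'
  obtain ⟨φ, hφ, hφc⟩ := exists_transport_of_walk hm hedge p
  rw [div_le_iff₀ (by exact_mod_cast hd), mul_comm, ← hp]
  exact (Wdist_le_transportCost (hm u) hφ.apply_eq).trans hφc

end Transport

section LazyWalk

variable {V : Type*} [DecidableEq V] {G : SimpleGraph V}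

theorem aut_trans_swap_apply_of_ne (σ : G ≃g G) {a b x : V} (hσa : σ a = b) (hσb : σ b = a)
    (hxa : x ≠ a) (hxb : x ≠ b) : σ.toEquiv.trans (Equiv.swap a b) x = σ x := by
  refine Equiv.swap_apply_of_ne_of_ne ?_ ?_
  · exact fun h => hxb (σ.injective (h.trans hσb.symm))
  · exact fun h => hxa (σ.injective (h.trans hσa.symm))

variable [DecidableRel G.Adj] {m : V → V → ℝ} {w : ℝ}

theorem isTransport_aut_trans_swap (hm : ∀ x y, m x y = if x = y ∨ G.Adj x y then w else 0)
    (σ : G ≃g G) {a b : V} (hab : G.Adj a b) (hσa : σ a = b) (hσb : σ b = a)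
    (hσ : ∀ x, σ x = x ∨ G.Adj x (σ x)) :
    IsTransport G (m a) (m b) (σ.toEquiv.trans (Equiv.swap a b)) := by
  have hφa : σ.toEquiv.trans (Equiv.swap a b) a = a := by simp [hσa]
  have hφb : σ.toEquiv.trans (Equiv.swap a b) b = b := by simp [hσb]
  constructor
  · intro x
    rw [hm, hm]
    congr 1
    apply propext
    by_cases hxa : x = a
    · subst hxa; simp [hφa, hab.symm]
    by_cases hxb : x = b
    · subst hxb; simp [hφb, hab]
    rw [aut_trans_swap_apply_of_ne σ hσa hσb hxa hxb, ← hσa, σ.map_adj_iff,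
      σ.injective.eq_iff]
  · intro x
    by_cases hxa : x = a
    · rw [hxa, hφa]
    by_cases hxb : x = b
    · rw [hxb, hφb]
    rw [aut_trans_swap_apply_of_ne σ hσa hσb hxa hxb]
    rcases hσ x with h | h
    · rw [h]
    · exact h.reachable

variable [Fintype V]

theorem sum_lazyWalk_apply (hm : ∀ x y, m x y = if x = y ∨ G.Adj x y then w else 0) (x : V) :
    ∑ y, m y x = (G.degree x + 1) * w := by
  have hnbhd : ({y | y = x ∨ G.Adj y x} : Finset V) = insert x (G.neighborFinset x) := by
    ext y
    simp [G.adj_comm x y]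
  calc ∑ y, m y x = #{y | y = x ∨ G.Adj y x} * w := by
        simp_rw [hm, Finset.sum_ite, Finset.sum_const_zero, add_zero, Finset.sum_const,
          nsmul_eq_mul]
    _ = (G.degree x + 1) * w := by
        rw [hnbhd, Finset.card_insert_of_notMem (G.notMem_neighborFinset_self x),
          G.card_neighborFinset_eq_degree]
        push_cast
        rfl

theorem transportCost_aut_trans_swap_le (hm : ∀ x y, m x y = if x = y ∨ G.Adj x y then w else 0)
    (σ : G ≃g G) {a b : V} (hσa : σ a = b) (hσb : σ b = a)
    (hσ : ∀ x, σ x = x ∨ G.Adj x (σ x)) :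
    transportCost G (m a) (σ.toEquiv.trans (Equiv.swap a b)) ≤
      #{x | G.Adj a x ∧ x ≠ b ∧ σ x ≠ x} * w := by
  rw [Finset.natCast_card_filter, Finset.sum_mul]
  refine Finset.sum_le_sum fun x _ => ?_
  by_cases hxa : x = a
  · simp [hxa, hσa]
  by_cases hxb : x = b
  · simp [hxb, hσb]
  rw [hm, aut_trans_swap_apply_of_ne σ hσa hσb hxa hxb]
  by_cases hσx : σ x = x
  · simp [hσx]
  have hadj : G.Adj x (σ x) := (hσ x).resolve_left hσx
  by_cases hax : G.Adj a x
  · simp [hax, hxb, hσx, dist_eq_one_iff_adj.mpr hadj]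
  · simp [hax, Ne.symm hxa]

end LazyWalk

section FinsetExchange

variable {α : Type*} [DecidableEq α] {s t : Finset α} {a b : α}

theorem Finset.sdiff_insert_erase_of_mem (ha : a ∈ s) (hb : b ∉ s) :
    s \ insert b (s.erase a) = {a} := by
  ext; simp only [mem_sdiff, mem_insert, mem_erase, mem_singleton]; grind

theorem Finset.insert_erase_sdiff_of_notMem (hb : b ∉ s) :
    insert b (s.erase a) \ s = {b} := by
  ext; simp only [mem_sdiff, mem_insert, mem_erase, mem_singleton]; grind

theorem Finset.eq_insert_erase_of_sdiff_eq_singleton (ha : s \ t = {a}) (hb : t \ s = {b}) :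
    t = insert b (s.erase a) := by
  ext x
  have hax := congrArg (x ∈ ·) ha
  have hbx := congrArg (x ∈ ·) hb
  simp only [mem_sdiff, mem_singleton, eq_iff_iff] at hax hbx
  simp only [mem_insert, mem_erase]
  grind

theorem Finset.map_swap_of_mem_of_notMem (ha : a ∈ s) (hb : b ∉ s) :
    s.map (Equiv.swap a b).toEmbedding = insert b (s.erase a) := by
  ext x
  simp only [mem_map_equiv, Equiv.symm_swap, Equiv.swap_apply_def, mem_insert, mem_erase]
  grind

theorem Finset.map_swap_of_mem_iff (h : a ∈ s ↔ b ∈ s) :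
    s.map (Equiv.swap a b).toEmbedding = s := by
  ext x
  simp only [mem_map_equiv, Equiv.symm_swap, Equiv.swap_apply_def]
  grind

theorem Finset.insert_erase_injOn (s : Finset α) :
    Set.InjOn (fun p : α × α => insert p.2 (s.erase p.1)) {p | p.1 ∈ s ∧ p.2 ∉ s} := by
  rintro ⟨a, b⟩ ⟨ha, hb⟩ ⟨a', b'⟩ ⟨ha', hb'⟩ h
  dsimp only at h
  have hb'' := insert_erase_sdiff_of_notMem (a := a) hb
  have ha'' := sdiff_insert_erase_of_mem ha hb
  rw [h, insert_erase_sdiff_of_notMem hb', singleton_inj] at hb''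
  rw [h, sdiff_insert_erase_of_mem ha' hb', singleton_inj] at ha''
  exact Prod.ext ha''.symm hb''.symm

theorem Finset.card_swap_apply {a b : Finset α} (h : #a = #b) (s : Finset α) :
    #(Equiv.swap a b s) = #s := by
  rw [Equiv.swap_apply_def]
  split_ifs with hsa hsb
  · rw [hsa, h]
  · rw [hsb, h]
  · rfl

end FinsetExchange

namespace HypergraphM

variable {n k M : ℕ}

theorem val_injective : Function.Injective fun H : HypergraphM n k M => H.val :=
  fun _ _ => Subtype.ext

theorem val_subset_powersetCard (H : HypergraphM n k M) : H.val ⊆ powersetCard k univ :=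
  fun s hs => mem_powersetCard.mpr ⟨subset_univ s, H.prop.1 s hs⟩

theorem exists_val_eq_insert_erase (H : HypergraphM n k M) {a b : Finset (Fin n)}
    (ha : a ∈ H.val) (hb : b ∈ powersetCard k univ \ H.val) :
    ∃ x : HypergraphM n k M, x.val = insert b (H.val.erase a) := by
  rw [mem_sdiff, mem_powersetCard] at hb
  refine ⟨⟨insert b (H.val.erase a), fun s hs => ?_, ?_⟩, rfl⟩
  · rcases mem_insert.mp hs with rfl | hs
    exacts [hb.1.2, H.prop.1 s (mem_of_mem_erase hs)]
  · rw [card_insert_of_notMem fun h => hb.2 (mem_of_mem_erase h), card_erase_of_mem ha,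
      H.prop.2, Nat.sub_add_cancel (H.prop.2 ▸ card_pos.mpr ⟨a, ha⟩)]

theorem adj_iff {H x : HypergraphM n k M} : (hypExchangeGraph n k M).Adj H x ↔
    ∃ a ∈ H.val, ∃ b ∈ powersetCard k univ \ H.val, x.val = insert b (H.val.erase a) := by
  constructor
  · rintro ⟨hHx, hxH⟩
    obtain ⟨a, ha⟩ := card_eq_one.mp hHx
    obtain ⟨b, hb⟩ := card_eq_one.mp hxH
    have haH : a ∈ H.val \ x.val := ha ▸ mem_singleton_self a
    have hbx : b ∈ x.val \ H.val := hb ▸ mem_singleton_self b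
    exact ⟨a, (mem_sdiff.mp haH).1, b, mem_sdiff.mpr ⟨x.val_subset_powersetCard
      (mem_sdiff.mp hbx).1, (mem_sdiff.mp hbx).2⟩, eq_insert_erase_of_sdiff_eq_singleton ha hb⟩
  · rintro ⟨a, ha, b, hb, hx⟩
    rw [mem_sdiff] at hb
    simp only [hypExchangeGraph, hx, sdiff_insert_erase_of_mem ha hb.2,
      insert_erase_sdiff_of_notMem hb.2, card_singleton, and_self]

theorem card_neighborFinset (H : HypergraphM n k M) :
    #((hypExchangeGraph n k M).neighborFinset H) = M * (n.choose k - M) := by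
  have himage : ((hypExchangeGraph n k M).neighborFinset H).image (·.val) =
      (H.val ×ˢ (powersetCard k univ \ H.val)).image
        fun p => insert p.2 (H.val.erase p.1) := by
    refine Finset.ext fun s => ?_
    simp only [mem_image, mem_neighborFinset, adj_iff, mem_product, Prod.exists]
    constructor
    · rintro ⟨x, ⟨a, ha, b, hb, hx⟩, rfl⟩
      exact ⟨a, b, ⟨ha, hb⟩, hx.symm⟩
    · rintro ⟨a, b, ⟨ha, hb⟩, rfl⟩
      obtain ⟨x, hx⟩ := H.exists_val_eq_insert_erase ha hb
      exact ⟨x, ⟨a, ha, b, hb, hx⟩, hx⟩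
  have hinj : Set.InjOn (fun p : Finset (Fin n) × Finset (Fin n) => insert p.2 (H.val.erase p.1))
      ↑(H.val ×ˢ (powersetCard k univ \ H.val)) :=
    H.val.insert_erase_injOn.mono fun p hp => by
      simp only [coe_product, Set.mem_prod, mem_coe, mem_sdiff] at hp
      exact ⟨hp.1, hp.2.2⟩
  rw [← card_image_of_injective _ val_injective, himage, card_image_of_injOn hinj, card_product,
    H.prop.2, card_sdiff_of_subset H.val_subset_powersetCard, card_powersetCard, card_univ,
    Fintype.card_fin, H.prop.2]

def relabel (τ : Equiv.Perm (Finset (Fin n))) (hτ : ∀ s, #(τ s) = #s) (H : HypergraphM n k M) :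
    HypergraphM n k M :=
  ⟨H.val.map τ.toEmbedding, fun s hs => by
    rw [← τ.apply_symm_apply s, hτ]
    exact H.prop.1 _ (mem_map_equiv.mp hs), by simpa using H.prop.2⟩

theorem relabel_val (τ : Equiv.Perm (Finset (Fin n))) (hτ : ∀ s, #(τ s) = #s)
    (H : HypergraphM n k M) : (relabel τ hτ H).val = H.val.map τ.toEmbedding := rfl

def relabelIso (τ : Equiv.Perm (Finset (Fin n))) (hτ : ∀ s, #(τ s) = #s) :
    hypExchangeGraph n k M ≃g hypExchangeGraph n k M where
  toFun := relabel τ hτ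
  invFun := relabel τ.symm fun s => by rw [← hτ, Equiv.apply_symm_apply]
  left_inv H := val_injective (by simp [relabel_val, Finset.map_map])
  right_inv H := val_injective (by simp [relabel_val, Finset.map_map])
  map_rel_iff' := by
    simp [hypExchangeGraph, relabel_val, ← Finset.map_sdiff]

def swapIso (a b : Finset (Fin n)) (h : #a = #b) :
    hypExchangeGraph n k M ≃g hypExchangeGraph n k M :=
  relabelIso (Equiv.swap a b) (card_swap_apply h)

variable {a b : Finset (Fin n)} (h : #a = #b)

theorem swapIso_apply_val (x : HypergraphM n k M) :
    (swapIso a b h x).val = x.val.map (Equiv.swap a b).toEmbedding := rfl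

theorem swapIso_swapIso (x : HypergraphM n k M) : swapIso a b h (swapIso a b h x) = x :=
  val_injective (by ext; simp [swapIso_apply_val, mem_map_equiv])

theorem swapIso_apply_eq_self {x : HypergraphM n k M} (hx : a ∈ x.val ↔ b ∈ x.val) :
    swapIso a b h x = x :=
  val_injective (map_swap_of_mem_iff hx)

theorem swapIso_apply_eq_or_adj (x : HypergraphM n k M) :
    swapIso a b h x = x ∨ (hypExchangeGraph n k M).Adj x (swapIso a b h x) := by
  by_cases hx : a ∈ x.val ↔ b ∈ x.val
  · exact Or.inl (swapIso_apply_eq_self h hx)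
  right
  have hmem {c d : Finset (Fin n)} (hc : c ∈ x.val) (hd : d ∉ x.val) (hcd : #c = #d) :
      d ∈ powersetCard k univ \ x.val :=
    mem_sdiff.mpr ⟨mem_powersetCard.mpr ⟨subset_univ d, hcd ▸ x.prop.1 c hc⟩, hd⟩
  rw [adj_iff, swapIso_apply_val]
  by_cases ha : a ∈ x.val
  · have hb : b ∉ x.val := fun hb => hx (iff_of_true ha hb)
    exact ⟨a, ha, b, hmem ha hb h, map_swap_of_mem_of_notMem ha hb⟩
  · have hb : b ∈ x.val := by tauto
    exact ⟨b, hb, a, hmem hb ha h.symm, by rw [Equiv.swap_comm, map_swap_of_mem_of_notMem hb ha]⟩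

theorem card_adj_swapIso_ne_le {H₁ H₂ : HypergraphM n k M} (ha : a ∈ H₁.val)
    (hb : b ∈ powersetCard k univ \ H₁.val) (hH₂ : H₂.val = insert b (H₁.val.erase a)) :
    #{x | (hypExchangeGraph n k M).Adj H₁ x ∧ x ≠ H₂ ∧ swapIso a b h x ≠ x} ≤
      (M - 1) * (n.choose k - M - 1) := by
  set S : Finset (HypergraphM n k M) :=
    {x | (hypExchangeGraph n k M).Adj H₁ x ∧ x ≠ H₂ ∧ swapIso a b h x ≠ x}
  set P := (H₁.val.erase a) ×ˢ ((powersetCard k univ \ H₁.val).erase b)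
  -- the swap fixes a neighbour `H₁ - a' + b'` iff exactly one of `a' = a`, `b' = b` holds
  have hsub : S.image (·.val) ⊆ P.image fun p => insert p.2 (H₁.val.erase p.1) := by
    intro s hs
    simp only [S, mem_image, mem_filter, mem_univ, true_and] at hs
    obtain ⟨x, ⟨hadj, hxH₂, hmoved⟩, rfl⟩ := hs
    obtain ⟨a', ha', b', hb', hx⟩ := adj_iff.mp hadj
    have hnot : ¬(a ∈ x.val ↔ b ∈ x.val) := fun hx => hmoved (swapIso_apply_eq_self h hx)
    have hne : ¬(a' = a ∧ b' = b) := by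
      rintro ⟨rfl, rfl⟩
      exact hxH₂ (val_injective (hx.trans hH₂.symm))
    rw [mem_sdiff] at hb hb'
    rw [hx, mem_insert, mem_erase, mem_insert, mem_erase] at hnot
    refine mem_image.mpr ⟨(a', b'), mem_product.mpr ⟨mem_erase.mpr ⟨?_, ha'⟩,
      mem_erase.mpr ⟨?_, mem_sdiff.mpr hb'⟩⟩, hx.symm⟩ <;> grind
  calc #S = #(S.image (·.val)) := (card_image_of_injective _ val_injective).symm
    _ ≤ #P := (card_le_card hsub).trans card_image_le
    _ = (M - 1) * (n.choose k - M - 1) := by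
      rw [card_product, card_erase_of_mem ha, card_erase_of_mem hb,
        card_sdiff_of_subset H₁.val_subset_powersetCard, card_powersetCard, card_univ,
        Fintype.card_fin, H₁.prop.2]

end HypergraphM

theorem hypExchangeGraph_isRegularOfDegree (n k M : ℕ) :
    (hypExchangeGraph n k M).IsRegularOfDegree (M * (n.choose k - M)) := fun H => by
  rw [← card_neighborFinset_eq_degree, H.card_neighborFinset]

theorem hypExchangeWalk_nonneg (n k M : ℕ) (H H' : HypergraphM n k M) :
    0 ≤ hypExchangeWalk n k M H H' := by
  unfold hypExchangeWalk
  split_ifs <;> positivity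

theorem hypExchangeWalk_exists_transport_of_adj {n k M : ℕ} {H₁ H₂ : HypergraphM n k M}
    (hadj : (hypExchangeGraph n k M).Adj H₁ H₂) :
    ∃ φ, IsTransport (hypExchangeGraph n k M) (hypExchangeWalk n k M H₁)
        (hypExchangeWalk n k M H₂) φ ∧
      transportCost (hypExchangeGraph n k M) (hypExchangeWalk n k M H₁) φ ≤
        ((M - 1) * (n.choose k - M - 1) : ℕ) * (1 / ((M * (n.choose k - M) : ℕ) + 1 : ℝ)) := by
  obtain ⟨a, ha, b, hb, hH₂⟩ := HypergraphM.adj_iff.mp hadj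
  have hab : #a = #b := (H₁.prop.1 a ha).trans (mem_powersetCard.mp (mem_sdiff.mp hb).1).2.symm
  set σ := HypergraphM.swapIso (M := M) a b hab
  have hσ₁ : σ H₁ = H₂ := HypergraphM.val_injective
    ((map_swap_of_mem_of_notMem ha (mem_sdiff.mp hb).2).trans hH₂.symm)
  have hσ₂ : σ H₂ = H₁ := by rw [← hσ₁, HypergraphM.swapIso_swapIso]
  have hmove := HypergraphM.swapIso_apply_eq_or_adj (k := k) (M := M) hab
  refine ⟨_, isTransport_aut_trans_swap (fun _ _ => rfl) σ hadj hσ₁ hσ₂ hmove,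
    (transportCost_aut_trans_swap_le (fun _ _ => rfl) σ hσ₁ hσ₂ hmove).trans ?_⟩
  gcongr
  exact HypergraphM.card_adj_swapIso_ne_le hab ha hb hH₂

theorem add_sub_one_mul_sub_sub_one {M C : ℕ} (hM : 0 < M) (hMC : M < C) :
    C + (M - 1) * (C - M - 1) = M * (C - M) + 1 := by
  have h1 : 1 ≤ M := hM
  have h2 : M ≤ C := hMC.le
  have h3 : 1 ≤ C - M := Nat.le_sub_of_add_le' hMC
  zify [h1, h2, h3]
  ring

/-- For `0 < M < C(n,k)`, the hypergraph exchange graph is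
`M(C(n,k)-M)`-regular, the uniform distribution is invariant for the lazy uniform
walk, and the Ricci curvature satisfies `κ(ℋ₁,ℋ₂) ≥ C(n,k)/(M(C(n,k)-M)+1)` for all
pairs of hypergraphs. -/
theorem hypExchange_regular_invariant_ricci (n k M : ℕ)
    (hM0 : 0 < M) (hMC : M < n.choose k) :
    (∀ H : HypergraphM n k M,
      (Finset.univ.filter (fun H' => (hypExchangeGraph n k M).Adj H H')).card =
        M * (n.choose k - M)) ∧
    (∀ H : HypergraphM n k M,
      ∑ H' : HypergraphM n k M,
          (((n.choose k).choose M : ℝ))⁻¹ * hypExchangeWalk n k M H' H =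
        (((n.choose k).choose M : ℝ))⁻¹) ∧
    (∀ H₁ H₂ : HypergraphM n k M,
      (n.choose k : ℝ) / ((M * (n.choose k - M) : ℕ) + 1 : ℝ) ≤
        ricci (hypExchangeGraph n k M) (hypExchangeWalk n k M) H₁ H₂) := by
  have hreg := hypExchangeGraph_isRegularOfDegree n k M
  refine ⟨fun H => ?_, fun H => ?_, fun H₁ H₂ => ?_⟩
  · rw [← neighborFinset_eq_filter, card_neighborFinset_eq_degree, hreg H]
  · rw [← Finset.mul_sum, sum_lazyWalk_apply (m := hypExchangeWalk n k M) (fun _ _ => rfl), hreg H]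
    field_simp
  · have hcurv := le_ricci_of_forall_adj (hypExchangeWalk_nonneg n k M) (by positivity)
      (fun _ _ => hypExchangeWalk_exists_transport_of_adj) H₁ H₂
    convert hcurv using 1
    rw [eq_sub_iff_add_eq, mul_one_div, ← add_div, div_eq_one_iff_eq (by positivity)]
    exact_mod_cast add_sub_one_mul_sub_sub_one hM0 hMC
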